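/- Let H_R be a subspace of H_S ⊗ H_E with dim H_R = d_R, dim H_S = d_S, let E_R = 𝟙_R / d_R be the maximally mixed state on H_R, and Ω_E = Tr_S(E_R). Then Tr(Ω_E²) ≤ d_S / d_R. -/

import Mathlib

open Matrix MeasureTheory
open scoped ComplexOrder Kronecker

/-- The trace norm `‖M‖₁ = Tr √(M†M)` of a complex matrix. -/
noncomputable def traceNorm {n : Type*} [Fintype n] [DecidableEq n]
    (M : Matrix n n ℂ) : ℝ :=
  ((Matrix.posSemidef_conjTranspose_mul_self M).1.eigenvectorUnitary.1 *
    diagonal (((↑) : ℝ → ℂ) ∘ (√·) ∘ (Matrix.posSemidef_conjTranspose_mul_self M).1.eigenvalues) *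
    (star (Matrix.posSemidef_conjTranspose_mul_self M).1.eigenvectorUnitary : Matrix n n ℂ)).trace.re

/-- The Hilbert–Schmidt norm `‖M‖₂ = √(Tr (M†M))`. -/
noncomputable def hsNorm {n : Type*} [Fintype n] (M : Matrix n n ℂ) : ℝ :=
  Real.sqrt ((Mᴴ * M).trace.re)

/-- Euclidean norm of a vector. -/
noncomputable def vnorm {n : Type*} [Fintype n] (φ : n → ℂ) : ℝ :=
  Real.sqrt (∑ i, Complex.normSq (φ i))

/-- Inner product `⟨φ|ψ⟩`. -/
noncomputable def cinner {n : Type*} [Fintype n] (φ ψ : n → ℂ) : ℂ := ∑ i, star (φ i) * ψ i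

/-- Outer product `|φ⟩⟨φ|`. -/
noncomputable def outer {n : Type*} (φ : n → ℂ) : Matrix n n ℂ :=
  Matrix.of fun i j => φ i * star (φ j)

/-- Partial trace over the environment (second factor). -/
noncomputable def ptraceE {dS dE : ℕ} (M : Matrix (Fin dS × Fin dE) (Fin dS × Fin dE) ℂ) :
    Matrix (Fin dS) (Fin dS) ℂ :=
  Matrix.of fun s s' => ∑ e, M (s, e) (s', e)

/-- Partial trace over the system (first factor). -/
noncomputable def ptraceS {dS dE : ℕ} (M : Matrix (Fin dS × Fin dE) (Fin dS × Fin dE) ℂ) :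
    Matrix (Fin dE) (Fin dE) ℂ :=
  Matrix.of fun e e' => ∑ s, M (s, e) (s, e')

/-- The swap (flip) operator `F(|a⟩⊗|b⟩) = |b⟩⊗|a⟩` as a matrix. -/
noncomputable def swapMatrix (d : ℕ) : Matrix (Fin d × Fin d) (Fin d × Fin d) ℂ :=
  Matrix.of fun p q => if p.1 = q.2 ∧ p.2 = q.1 then 1 else 0

/-- `μ` is the uniform (Haar, unitarily invariant) probability measure on the unit
sphere of the subspace given by the orthogonal projection `P`: it is a probability
measure, concentrated on unit vectors of the range of `P`, and invariant under every
unitary commuting with `P` (i.e. preserving the subspace). -/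
def IsUniformOnSphere {ι : Type*} [Fintype ι] [DecidableEq ι]
    (P : Matrix ι ι ℂ) (μ : Measure (ι → ℂ)) : Prop :=
  IsProbabilityMeasure μ ∧
  μ {φ | P.mulVec φ = φ ∧ vnorm φ = 1} = 1 ∧
  ∀ U ∈ Matrix.unitaryGroup ι ℂ, U * P = P * U →
    Measure.map (fun φ => U.mulVec φ) μ = μ

/-!
Write `Q = Tr_S P`. Partial traces preserve positivity and `Tr_S 𝟙 = d_S 𝟙`, so `0 ≤ P ≤ 𝟙`
gives `0 ≤ Q ≤ d_S 𝟙`. Hence `Tr Q² ≤ d_S Tr Q = d_S Tr P = d_S d_R`, and `Ω_E = Q / d_R`.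
-/

open scoped MatrixOrder

namespace Matrix

lemma PosSemidef.trace_mul_nonneg {𝕜 n : Type*} [RCLike 𝕜] [Fintype n] [DecidableEq n]
    {A B : Matrix n n 𝕜} (hA : A.PosSemidef) (hB : B.PosSemidef) : 0 ≤ (A * B).trace := by
  have hR : (CFC.sqrt A)ᴴ = CFC.sqrt A := (CFC.sqrt_nonneg A).posSemidef.1.eq
  calc 0 ≤ (CFC.sqrt A * B * (CFC.sqrt A)ᴴ).trace :=
        (hB.mul_mul_conjTranspose_same _).trace_nonneg
    _ = (A * B).trace := by
      rw [hR, trace_mul_cycle, CFC.sqrt_mul_sqrt_self A hA.nonneg]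

end Matrix

section PartialTrace

variable {dS dE : ℕ}

/-- The isometry `|s⟩ ⊗ 𝟙 : H_E → H_S ⊗ H_E`. -/
def systemKet (dE : ℕ) (s : Fin dS) : Matrix (Fin dS × Fin dE) (Fin dE) ℂ :=
  Matrix.of fun p e => if p = (s, e) then 1 else 0

lemma ptraceS_eq_sum (M : Matrix (Fin dS × Fin dE) (Fin dS × Fin dE) ℂ) :
    ptraceS M = ∑ s : Fin dS, (systemKet dE s)ᴴ * M * systemKet dE s := by
  ext e e'
  simp [ptraceS, systemKet, Matrix.sum_apply, Matrix.mul_apply, conjTranspose_apply]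

lemma Matrix.PosSemidef.ptraceS {M : Matrix (Fin dS × Fin dE) (Fin dS × Fin dE) ℂ}
    (hM : M.PosSemidef) : (ptraceS M).PosSemidef := by
  rw [ptraceS_eq_sum]
  exact posSemidef_sum _ fun s _ => hM.conjTranspose_mul_mul_same _

lemma trace_ptraceS (M : Matrix (Fin dS × Fin dE) (Fin dS × Fin dE) ℂ) :
    (ptraceS M).trace = M.trace := by
  simp only [trace, ptraceS, diag_apply, of_apply, Fintype.sum_prod_type]
  exact Finset.sum_comm

lemma ptraceS_smul (c : ℂ) (M : Matrix (Fin dS × Fin dE) (Fin dS × Fin dE) ℂ) :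
    ptraceS (c • M) = c • ptraceS M := by
  ext e e'
  simp [ptraceS, Finset.mul_sum]

lemma ptraceS_sub (M N : Matrix (Fin dS × Fin dE) (Fin dS × Fin dE) ℂ) :
    ptraceS (M - N) = ptraceS M - ptraceS N := by
  ext e e'
  simp [ptraceS]

lemma ptraceS_one :
    ptraceS (1 : Matrix (Fin dS × Fin dE) (Fin dS × Fin dE) ℂ) = (dS : ℂ) • 1 := by
  ext e e'
  by_cases h : e = e' <;> simp [ptraceS, one_apply, h]

theorem trace_ptraceS_mul_self_le {M : Matrix (Fin dS × Fin dE) (Fin dS × Fin dE) ℂ}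
    (hM : M.PosSemidef) (hM1 : (1 - M).PosSemidef) :
    (ptraceS M * ptraceS M).trace ≤ dS * M.trace := by
  have h := hM.ptraceS.trace_mul_nonneg hM1.ptraceS
  rwa [ptraceS_sub, ptraceS_one, Matrix.mul_sub, trace_sub, Matrix.mul_smul, mul_one, trace_smul,
    trace_ptraceS, smul_eq_mul, sub_nonneg] at h

end PartialTrace

theorem trace_omegaE_sq_le_general (dS dE dR : ℕ)
    (P : Matrix (Fin dS × Fin dE) (Fin dS × Fin dE) ℂ)
    (hP1 : P.IsHermitian) (hP2 : P * P = P) (hP3 : P.trace = dR) :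
    ((ptraceS ((dR : ℂ)⁻¹ • P) * ptraceS ((dR : ℂ)⁻¹ • P)).trace).re
      ≤ (dS : ℝ) / dR := by
  have hP : IsStarProjection P := ⟨hP2, hP1⟩
  have hQsq := trace_ptraceS_mul_self_le hP.nonneg.posSemidef hP.one_sub_nonneg.posSemidef
  rw [hP3] at hQsq
  have hscale : ((dR : ℂ)⁻¹ ^ 2 * (dS * dR) : ℂ) = ((dS / dR : ℝ) : ℂ) := by
    rcases eq_or_ne (dR : ℂ) 0 with h | h
    · simp [h] -- `(0 : ℂ)⁻¹ = 0`: both sides vanish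
    · push_cast; field_simp
  rw [ptraceS_smul, smul_mul_smul_comm, trace_smul, smul_eq_mul, ← sq]
  have hc : (0 : ℂ) ≤ (dR : ℂ)⁻¹ ^ 2 := by
    rw [show (dR : ℂ)⁻¹ ^ 2 = (((dR : ℝ)⁻¹ ^ 2 : ℝ) : ℂ) by push_cast; rfl]
    exact Complex.zero_le_real.mpr (by positivity)
  have hscaled := mul_le_mul_of_nonneg_left hQsq hc
  exact (Complex.le_def.mp (hscale ▸ hscaled)).1

/-- For a subspace `H_R ⊆ H_S ⊗ H_E` with projector `P` of rank `d_R`,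
`E_R = P/d_R`, `Ω_E = Tr_S E_R`: one has `Tr(Ω_E²) ≤ d_S/d_R`. -/
theorem trace_omegaE_sq_le (dS dE dR : ℕ) (hdR : 0 < dR)
    (P : Matrix (Fin dS × Fin dE) (Fin dS × Fin dE) ℂ)
    (hP1 : P.IsHermitian) (hP2 : P * P = P) (hP3 : P.trace = dR) :
    ((ptraceS ((dR : ℂ)⁻¹ • P) * ptraceS ((dR : ℂ)⁻¹ • P)).trace).re
      ≤ (dS : ℝ) / dR :=
  trace_omegaE_sq_le_general dS dE dR P hP1 hP2 hP3
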